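/- Let f : U → W be smooth over K, where U ⊆ V open. Define Tf : U × V → W × W by Tf(x,v) = (f(x), df(x)v). Identifying U × V with {x + εv} ⊆ V ⊗_K K[ε] and W × W with W ⊗_K K[ε], the map Tf is of class C¹ over the ring of dual numbers K[ε], and (Tf)^[1] = T(f^[1]) under the canonical identifications. -/

import Mathlib

/-- The scalar action of the dual numbers `K[ε]` on the scalar extension
`M ⊗ K[ε] = M ⊕ εM`, realized on `M × M`: `(a + εb)·(v + εw) = av + ε(aw + bv)`. -/
def dualSMul {K M : Type*} [CommRing K] [AddCommGroup M] [Module K M]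
    (a : DualNumber K) (p : M × M) : M × M :=
  (a.fst • p.1, a.fst • p.2 + a.snd • p.1)

/-!
Write `t = a + εb` and `u = w + εs`. The first component of the difference quotient identity of
`Tf` is that of `f`; the second one is
`f^[1](x + aw, v + as + bw, 0) - f^[1](x, v, 0) = a f^[2]((x,w,a), (v,s,b), 0) + b f^[1](x,w,a)`.
For a scalar `τ`, expanding `f` by `f^[1]` and `f^[1]` by `f^[2]` along the two routes
`x → x + aw → P` and `x → x + τv → P` to `P = x + τv + (a + τb)(w + τs)` shows that `τ` times a
`τ`-deformation of the left side equals `τ` times one of the right side. Cancelling `τ` when it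
is a unit and letting `τ → 0` through the dense set of units gives the identity, by continuity of
`f^[1]`, `f^[2]` and uniqueness of limits in the Hausdorff space `W`.
-/

open Filter Topology

theorem eq_of_continuousAt_of_eventually_smul_eq {K W : Type*} [Monoid K]
    [TopologicalSpace K] [MulAction K W] [TopologicalSpace W] [T2Space W]
    (hdense : Dense {t : K | IsUnit t})
    {F G : K → W} {τ₀ : K} (hF : ContinuousAt F τ₀) (hG : ContinuousAt G τ₀)
    (h : ∀ᶠ τ in 𝓝 τ₀, τ • F τ = τ • G τ) : F τ₀ = G τ₀ := by
  have : (𝓝[{t : K | IsUnit t}] τ₀).NeBot := mem_closure_iff_nhdsWithin_neBot.mp (hdense τ₀)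
  have hFG : F =ᶠ[𝓝[{t : K | IsUnit t}] τ₀] G := by
    filter_upwards [nhdsWithin_le_nhds h, self_mem_nhdsWithin] with τ hτ hunit
    exact hunit.smul_left_cancel.mp hτ
  exact tendsto_nhds_unique ((hF.mono_left nhdsWithin_le_nhds).congr' hFG)
    (hG.mono_left nhdsWithin_le_nhds)

section DiffQuot

variable {K V W : Type*} [CommRing K] [AddCommGroup V] [Module K V]
  [AddCommGroup W] [Module K W]

/-- The set `U^[1]` on which the difference quotient `f^[1]` of a map on `U` is defined. -/
def diffQuotDomain (U : Set V) : Set (V × V × K) :=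
  {p | p.1 ∈ U ∧ p.1 + p.2.2 • p.2.1 ∈ U}

def HasDiffQuotOn (f : V → W) (f1 : V × V × K → W) (U : Set V) : Prop :=
  ∀ x v (t : K), x ∈ U → x + t • v ∈ U → f (x + t • v) - f x = t • f1 (x, v, t)

theorem mk_zero_mem_diffQuotDomain {U : Set V} {x : V} (hx : x ∈ U) (v : V) :
    ((x, v, 0) : V × V × K) ∈ diffQuotDomain U :=
  ⟨hx, by simpa using hx⟩

theorem isOpen_diffQuotDomain [TopologicalSpace K] [TopologicalSpace V] [ContinuousAdd V]
    [ContinuousSMul K V] {U : Set V} (hU : IsOpen U) : IsOpen (diffQuotDomain (K := K) U) :=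
  (hU.preimage continuous_fst).inter (hU.preimage (by fun_prop))

theorem smul_diffQuot_second_order {f : V → W} {f1 : V × V × K → W}
    {f2 : (V × V × K) × (V × V × K) × K → W} {U : Set V}
    (hf1 : HasDiffQuotOn f f1 U) (hf2 : HasDiffQuotOn f1 f2 (diffQuotDomain U))
    {x v w s : V} {a b τ : K} (hx : x ∈ U) (hxa : x + a • w ∈ U) (hxτ : x + τ • v ∈ U)
    (hP : x + τ • v + (a + τ * b) • (w + τ • s) ∈ U) :
    τ • (f1 (x + a • w, v + (a • s + b • w) + τ • (b • s), τ) - f1 (x, v, τ)) =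
      τ • (a • f2 ((x, w, a), (v, s, b), τ) + b • f1 (x + τ • v, w + τ • s, a + τ * b)) := by
  have hpath : x + τ • v + (a + τ * b) • (w + τ • s) =
      x + a • w + τ • (v + (a • s + b • w) + τ • (b • s)) := by
    module
  have hA := hf1 _ _ _ hxa (hpath ▸ hP)
  have hB := hf1 _ _ _ hx hxτ
  have hC := hf1 _ _ _ hx hxa
  have hD := hf1 _ _ _ hxτ hP
  have hE := hf2 (x, w, a) (v, s, b) τ ⟨hx, hxa⟩ ⟨hxτ, hP⟩
  simp only [Prod.smul_mk, Prod.mk_add_mk, smul_eq_mul] at hE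
  rw [hpath] at hD
  linear_combination (norm := module) hB - hA + hD - hC + a • hE

theorem diffQuot_second_order [TopologicalSpace K] [IsTopologicalRing K]
    [TopologicalSpace V] [ContinuousAdd V] [ContinuousSMul K V]
    [TopologicalSpace W] [IsTopologicalAddGroup W] [ContinuousConstSMul K W] [T2Space W]
    (hdense : Dense {t : K | IsUnit t}) {U : Set V} (hU : IsOpen U)
    {f : V → W} {f1 : V × V × K → W} {f2 : (V × V × K) × (V × V × K) × K → W}
    (hf1c : ContinuousOn f1 (diffQuotDomain U)) (hf1 : HasDiffQuotOn f f1 U)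
    (hf2c : ContinuousOn f2 (diffQuotDomain (diffQuotDomain U)))
    (hf2 : HasDiffQuotOn f1 f2 (diffQuotDomain U))
    {x : V} (v w s : V) {a : K} (b : K) (hx : x ∈ U) (hxa : x + a • w ∈ U) :
    f1 (x + a • w, v + (a • s + b • w), 0) - f1 (x, v, 0) =
      a • f2 ((x, w, a), (v, s, b), 0) + b • f1 (x, w, a) := by
  have hD1 : IsOpen (diffQuotDomain (K := K) U) := isOpen_diffQuotDomain hU
  have hD2 := isOpen_diffQuotDomain (K := K) hD1
  have hxw : ((x, w, a) : V × V × K) ∈ diffQuotDomain U := ⟨hx, hxa⟩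
  have hf1at {p} (hp : p ∈ diffQuotDomain U) := hf1c.continuousAt (hD1.mem_nhds hp)
  have hF : ContinuousAt (fun τ : K =>
      f1 (x + a • w, v + (a • s + b • w) + τ • (b • s), τ) - f1 (x, v, τ)) 0 := by
    refine ContinuousAt.sub ?_ ?_
    · exact (hf1at (mk_zero_mem_diffQuotDomain hxa (v + (a • s + b • w)))).comp_of_eq
        (by fun_prop) (by simp)
    · exact (hf1at (mk_zero_mem_diffQuotDomain hx v)).comp_of_eq (by fun_prop) rfl
  have hG : ContinuousAt (fun τ : K =>
      a • f2 ((x, w, a), (v, s, b), τ) + b • f1 (x + τ • v, w + τ • s, a + τ * b)) 0 := by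
    refine (ContinuousAt.const_smul ?_ a).add (ContinuousAt.const_smul ?_ b)
    · exact (hf2c.continuousAt (hD2.mem_nhds (mk_zero_mem_diffQuotDomain hxw _))).comp_of_eq
        (by fun_prop) rfl
    · exact (hf1at hxw).comp_of_eq (by fun_prop) (by simp)
  have hpts : ContinuousAt
      (fun τ : K => (x + τ • v, x + τ • v + (a + τ * b) • (w + τ • s))) 0 := by
    fun_prop
  have hsmul : ∀ᶠ τ in 𝓝 (0 : K),
      τ • (f1 (x + a • w, v + (a • s + b • w) + τ • (b • s), τ) - f1 (x, v, τ)) =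
        τ • (a • f2 ((x, w, a), (v, s, b), τ) + b • f1 (x + τ • v, w + τ • s, a + τ * b)) := by
    filter_upwards [hpts.eventually_mem ((hU.prod hU).mem_nhds (by simpa using ⟨hx, hxa⟩))]
      with τ ⟨hxτ, hP⟩
    exact smul_diffQuot_second_order hf1 hf2 hx hxa hxτ hP
  simpa using eq_of_continuousAt_of_eventually_smul_eq hdense hF hG hsmul

end DiffQuot

/-- If `f : U → W` is smooth over `K` (here: with `C²`-data `f^[1]`, `f^[2]`), then the
tangent map `Tf(x,v) = (f(x), df(x)v)`, viewed on `U ⊕ εV ⊆ V ⊗ K[ε]` with values in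
`W ⊗ K[ε]`, is of class `C¹` over the dual numbers `K[ε]`, with difference quotient
map `(Tf)^[1] = T(f^[1])` under the canonical identifications. -/
theorem tangent_map_C1_over_dual_numbers
    {K : Type*} [CommRing K] [TopologicalSpace K] [IsTopologicalRing K]
    {V W : Type*}
    [AddCommGroup V] [Module K V] [TopologicalSpace V]
    [IsTopologicalAddGroup V] [ContinuousSMul K V]
    [AddCommGroup W] [Module K W] [TopologicalSpace W]
    [IsTopologicalAddGroup W] [ContinuousSMul K W] [T2Space W]
    (hdense : Dense {t : K | IsUnit t})
    {U : Set V} (hU : IsOpen U)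
    (f : V → W) (f1 : V × V × K → W)
    (f2 : (V × V × K) × (V × V × K) × K → W)
    (hf1c : ContinuousOn f1 {p : V × V × K | p.1 ∈ U ∧ p.1 + p.2.2 • p.2.1 ∈ U})
    (hf1d : ∀ (x v : V) (t : K), x ∈ U → x + t • v ∈ U →
      f (x + t • v) - f x = t • f1 (x, v, t))
    (hf2c : ContinuousOn f2 {q : (V × V × K) × (V × V × K) × K |
      (q.1.1 ∈ U ∧ q.1.1 + q.1.2.2 • q.1.2.1 ∈ U) ∧
      ((q.1 + q.2.2 • q.2.1).1 ∈ U ∧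
        (q.1 + q.2.2 • q.2.1).1 + (q.1 + q.2.2 • q.2.1).2.2 • (q.1 + q.2.2 • q.2.1).2.1 ∈ U)})
    (hf2d : ∀ (p q : V × V × K) (t : K),
      (p.1 ∈ U ∧ p.1 + p.2.2 • p.2.1 ∈ U) →
      ((p + t • q).1 ∈ U ∧ (p + t • q).1 + (p + t • q).2.2 • (p + t • q).2.1 ∈ U) →
      f1 (p + t • q) - f1 p = t • f2 (p, q, t)) :
    ContinuousOn
      (fun q : (V × V) × (V × V) × DualNumber K =>
        ((f1 (q.1.1, q.2.1.1, q.2.2.fst),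
          f2 ((q.1.1, q.2.1.1, q.2.2.fst), (q.1.2, q.2.1.2, q.2.2.snd), 0)) : W × W))
      {q : (V × V) × (V × V) × DualNumber K |
        q.1.1 ∈ U ∧ q.1.1 + q.2.2.fst • q.2.1.1 ∈ U} ∧
    (∀ (z u : V × V) (t : DualNumber K), z.1 ∈ U → z.1 + t.fst • u.1 ∈ U →
      ((f ((z + dualSMul t u).1), f1 ((z + dualSMul t u).1, (z + dualSMul t u).2, 0)) : W × W)
        - (f z.1, f1 (z.1, z.2, 0))
      = dualSMul t
          ((f1 (z.1, u.1, t.fst),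
            f2 ((z.1, u.1, t.fst), (z.2, u.2, t.snd), 0)) : W × W)) := by
  have hfst : Continuous (TrivSqZeroExt.fst : DualNumber K → K) := TrivSqZeroExt.continuous_fst
  have hsnd : Continuous (TrivSqZeroExt.snd : DualNumber K → K) := TrivSqZeroExt.continuous_snd
  refine ⟨ContinuousOn.prodMk ?_ ?_, ?_⟩
  · exact hf1c.comp (by fun_prop) fun q hq => hq
  · exact hf2c.comp (by fun_prop) fun q hq =>
      mk_zero_mem_diffQuotDomain (U := diffQuotDomain U) hq _
  · rintro ⟨x, v⟩ ⟨w, s⟩ t hx hxw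
    exact Prod.ext (hf1d x w t.fst hx hxw)
      (diffQuot_second_order hdense hU hf1c hf1d hf2c hf2d v w s t.snd hx hxw)
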